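/- arXiv:1812.04698 — 3 statements merged into one kernel-verified Lean document; each statement's English description precedes it below -/
import Mathlib

section
/- Let S be a slice at m for a G-action on M. Then there exists an open neighborhood V of m in M such that every point of V has stabilizer subconjugate to G_m; i.e., V ⊆ M_{≤(G_m)} (the neighboring subgroups theorem). -/
/-- The conjugate `aHa⁻¹` of a subgroup. -/
def conjSub {G : Type*} [Group G] (a : G) (H : Subgroup G) : Subgroup G :=
  Subgroup.map ((MulAut.conj a).toMonoidHom) H

/-- neighboring subgroups theorem: If `S` is a slice at `m`, then there is
an open neighborhood `V` of `m` all of whose points have stabilizer subconjugate to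
`G_m`. -/
theorem neighboring_subgroups {G M : Type*} [Group G] [TopologicalSpace G]
    [IsTopologicalGroup G] [TopologicalSpace M] [MulAction G M] [ContinuousSMul G M]
    (m : M) (S : Set M) (hmS : m ∈ S)
    (sl1 : ∀ g ∈ MulAction.stabilizer G m, ∀ s ∈ S, g • s ∈ S)
    (sl2 : ∀ g : G, (∃ s ∈ S, g • s ∈ S) → g ∈ MulAction.stabilizer G m)
    (sl3 : ∃ (U : Set (G ⧸ MulAction.stabilizer G m))
        (χ : G ⧸ MulAction.stabilizer G m → G) (V : Set M) (φ : ↥U × ↥S ≃ₜ ↥V),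
        IsOpen U ∧ QuotientGroup.mk (1 : G) ∈ U ∧
        (∀ u : ↥U, QuotientGroup.mk (χ u.1) = u.1) ∧
        IsOpen V ∧ m ∈ V ∧
        (∀ (u : ↥U) (s : ↥S), ((φ (u, s) : ↥V) : M) = χ u.1 • (s.1 : M))) :
    ∃ V : Set M, IsOpen V ∧ m ∈ V ∧
      ∀ v ∈ V, ∃ g : G, conjSub g (MulAction.stabilizer G v) ≤ MulAction.stabilizer G m := by
  obtain ⟨U, χ, V, φ, hU, h1, hχ, hVopen, hmV, hφ⟩ := sl3
  refine ⟨V, hVopen, hmV, fun v hv => ?_⟩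
  set p := φ.symm ⟨v, hv⟩ with hp
  obtain ⟨u, s⟩ := p
  have hvs : v = χ u.1 • (s.1 : M) := by
    have h2 := hφ u s
    rw [show ((u, s) : ↥U × ↥S) = φ.symm ⟨v, hv⟩ from hp,
      Homeomorph.apply_symm_apply] at h2
    simpa using h2
  refine ⟨(χ u.1)⁻¹, fun h hh => ?_⟩
  obtain ⟨k, hk, rfl⟩ := hh
  apply sl2
  refine ⟨s.1, s.2, ?_⟩
  have hkv : k • v = v := hk
  have : ((MulAut.conj (χ u.1)⁻¹) k) • (s.1 : M) = s.1 := by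
    simp only [MulAut.conj_apply, inv_inv]
    rw [mul_smul, mul_smul, ← hvs, hkv, hvs]
    rw [inv_smul_smul]
  show (MulAut.conj (χ u.1)⁻¹) k • (s.1:M) ∈ S
  rw [this]
  exact s.2
end

section
/- Let S be a slice at m for a G-action on M. Then the saturation G·S is an open neighborhood of the orbit G·m in M, and S is closed in G·S. -/
open Pointwise

/-- The saturation `G • S` of a set `S` under a group action. -/
def saturation (G : Type*) {M : Type*} [SMul G M] (S : Set M) : Set M :=
  {x | ∃ g : G, ∃ s ∈ S, g • s = x}

/-- If `S` is a slice at `m`, then `G • S` is an open neighborhood of the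
orbit `G • m`, and `S` is closed in `G • S`. -/
theorem saturation_open_and_slice_closed {G M : Type*} [Group G] [TopologicalSpace G]
    [IsTopologicalGroup G] [TopologicalSpace M] [MulAction G M] [ContinuousSMul G M]
    (m : M) (S : Set M) (hmS : m ∈ S)
    (sl1 : ∀ g ∈ MulAction.stabilizer G m, ∀ s ∈ S, g • s ∈ S)
    (sl2 : ∀ g : G, (∃ s ∈ S, g • s ∈ S) → g ∈ MulAction.stabilizer G m)
    (U : Set (G ⧸ MulAction.stabilizer G m)) (χ : G ⧸ MulAction.stabilizer G m → G)
    (V : Set M) (φ : ↥U × ↥S ≃ₜ ↥V)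
    (hU : IsOpen U) (h1U : QuotientGroup.mk (1 : G) ∈ U)
    (hχ : ∀ u : ↥U, QuotientGroup.mk (χ u.1) = u.1)
    (hV : IsOpen V) (hmV : m ∈ V)
    (hφ : ∀ (u : ↥U) (s : ↥S), ((φ (u, s) : ↥V) : M) = χ u.1 • (s.1 : M))
    (hclosed : IsClosed {p : ↥U × ↥S | p.1.1 = QuotientGroup.mk (1 : G)}) :
    IsOpen (saturation G S) ∧
    MulAction.orbit G m ⊆ saturation G S ∧
    IsClosed {x : ↥(saturation G S) | (x : M) ∈ S} := by
  classical
  set c : G := χ (QuotientGroup.mk (1 : G)) with hcdef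
  have hc1 : (QuotientGroup.mk c : G ⧸ MulAction.stabilizer G m) = QuotientGroup.mk (1 : G) := hχ ⟨_, h1U⟩
  have hcH : c ∈ MulAction.stabilizer G m := by
    have := QuotientGroup.eq.1 hc1.symm
    simpa using this
  -- membership of φ-images in V
  have hφmem : ∀ (u : ↥U) (s : ↥S), χ u.1 • (s.1 : M) ∈ V := fun u s => hφ u s ▸ (φ (u, s)).2
  -- for s ∈ S, c • s ∈ V
  have hcsV : ∀ s ∈ S, c • s ∈ V := fun s hs => hφmem ⟨_, h1U⟩ ⟨s, hs⟩
  -- φ.symm of a point presented as χ u • s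
  have hφsymm : ∀ (u : ↥U) (s : ↥S) (v : ↥V), (v : M) = χ u.1 • (s.1 : M) →
      φ.symm v = (u, s) := by
    intro u s v hv
    have hps : φ (u, s) = v := Subtype.ext (by rw [hφ u s, hv])
    rw [← hps, Homeomorph.symm_apply_apply]
  -- coordinate determination from sl2
  have coordA : ∀ (u : ↥U) (s' : ↥S) (b : G) (s : M), s ∈ S →
      b • s = χ u.1 • (s'.1 : M) → u.1 = QuotientGroup.mk b := by
    intro u s' b s hs h
    have hmem : ((χ u.1)⁻¹ * b) • s ∈ S := by
      rw [mul_smul, h, inv_smul_smul]; exact s'.2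
    have h2 : (χ u.1)⁻¹ * b ∈ MulAction.stabilizer G m := sl2 _ ⟨s, hs, hmem⟩
    rw [← hχ u]
    exact QuotientGroup.eq.2 h2
  -- Part 1 : openness
  have hVsat : ∀ v ∈ V, v ∈ saturation G S := by
    intro v hv
    obtain ⟨p, hp⟩ := φ.surjective ⟨v, hv⟩
    refine ⟨χ p.1.1, p.2.1, p.2.2, ?_⟩
    have := hφ p.1 p.2
    rw [hp] at this
    exact this.symm
  have hsat : saturation G S = ⋃ g : G, (g * c⁻¹) • V := by
    ext x
    constructor
    · rintro ⟨g, s, hs, rfl⟩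
      refine Set.mem_iUnion.2 ⟨g, ⟨c • s, hcsV s hs, ?_⟩⟩
      show (g * c⁻¹) • c • s = g • s
      rw [smul_smul, mul_assoc, inv_mul_cancel, mul_one]
    · intro hx
      obtain ⟨g, v, hv, rfl⟩ := Set.mem_iUnion.1 hx
      obtain ⟨g', s, hs, rfl⟩ := hVsat v hv
      exact ⟨g * c⁻¹ * g', s, hs, (mul_smul _ _ _)⟩
  have part1 : IsOpen (saturation G S) := by
    rw [hsat]
    exact isOpen_iUnion fun g => hV.smul _
  -- Part 2
  have part2 : MulAction.orbit G m ⊆ saturation G S := by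
    rintro x ⟨g, rfl⟩
    exact ⟨g, m, hmS, rfl⟩
  refine ⟨part1, part2, ?_⟩
  -- Part 3
  -- {u ∈ U | u = ⟦1⟧} is closed in U
  have hF1 : IsClosed {u : ↥U | u.1 = QuotientGroup.mk (1 : G)} := by
    have hcont : Continuous fun u : ↥U => (u, (⟨m, hmS⟩ : ↥S)) :=
      continuous_id.prodMk continuous_const
    exact hclosed.preimage hcont
  have hclosure1 : ∀ z ∈ closure {(QuotientGroup.mk (1 : G) : G ⧸ MulAction.stabilizer G m)}, z ∈ U →
      z = QuotientGroup.mk (1 : G) := by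
    intro z hz hzU
    have h1 : (⟨z, hzU⟩ : ↥U) ∈ closure {u : ↥U | u.1 = QuotientGroup.mk (1 : G)} := by
      rw [closure_subtype]
      have himg : Subtype.val '' {u : ↥U | u.1 = QuotientGroup.mk (1 : G)} =
          {(QuotientGroup.mk (1 : G) : G ⧸ MulAction.stabilizer G m)} := by
        ext w
        constructor
        · rintro ⟨u, hu, rfl⟩; exact hu
        · rintro rfl; exact ⟨⟨_, h1U⟩, rfl, rfl⟩
      rw [himg]
      exact hz
    exact hF1.closure_subset h1
  -- main closure lemma
  have key : ∀ x ∈ closure S, x ∈ saturation G S → x ∈ S := by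
    rintro x hxcl ⟨g, s₀, hs₀, rfl⟩
    set a : G := c * g⁻¹ with hadef
    have hax : a • (g • s₀) = c • s₀ := by
      rw [smul_smul, mul_assoc, inv_mul_cancel, mul_one]
    -- the open neighborhood N of x
    have hxN : g • s₀ ∈ (g * c⁻¹) • V := by
      refine ⟨c • s₀, hcsV s₀ hs₀, ?_⟩
      show (g * c⁻¹) • c • s₀ = g • s₀
      rw [smul_smul, mul_assoc, inv_mul_cancel, mul_one]
    obtain ⟨y, hyN, hyS⟩ :=
      mem_closure_iff.1 hxcl _ (hV.smul (g * c⁻¹)) hxN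
    -- extract w = ⟦a⟧ ∈ U from y
    obtain ⟨vy, hvyV, hvy⟩ := hyN
    have hay : a • y ∈ V := by
      have : a • y = vy := by
        rw [← hvy, smul_smul, hadef]
        rw [show c * g⁻¹ * (g * c⁻¹) = 1 by group, one_smul]
      rw [this]; exact hvyV
    have hwU : (QuotientGroup.mk a : G ⧸ MulAction.stabilizer G m) ∈ U := by
      set p := φ.symm ⟨a • y, hay⟩ with hpdef
      have hpeq : χ p.1.1 • (p.2.1 : M) = a • y := by
        have := hφ p.1 p.2
        rw [← hpdef] at *
        have h2 : φ p = ⟨a • y, hay⟩ := by rw [hpdef, Homeomorph.apply_symm_apply]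
        rw [h2] at this
        exact this.symm
      have := coordA p.1 p.2 a y hyS hpeq.symm
      exact this ▸ p.1.2
    set χw : G := χ (QuotientGroup.mk a) with hχwdef
    have hχw : (QuotientGroup.mk χw : G ⧸ MulAction.stabilizer G m) = QuotientGroup.mk a := hχ ⟨_, hwU⟩
    have hh1 : χw⁻¹ * a ∈ MulAction.stabilizer G m := QuotientGroup.eq.1 hχw
    -- a • S ⊆ V with coordinate ⟦a⟧
    have haS : ∀ y' ∈ S, a • y' = χw • ((χw⁻¹ * a) • y') := by
      intro y' _
      rw [smul_smul, mul_inv_cancel_left]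
    -- c • s₀ ∈ closure (a • S)
    have hclos2 : c • s₀ ∈ closure (a • S) := by
      rw [← hax]
      have : a • (g • s₀) ∈ a • closure S := ⟨g • s₀, hxcl, rfl⟩
      rwa [← closure_smul] at this
    have haSV : (a • S : Set M) ⊆ V := by
      rintro _ ⟨y', hy', rfl⟩
      show a • y' ∈ V
      rw [haS y' hy']
      exact hφmem ⟨_, hwU⟩ ⟨_, sl1 _ hh1 y' hy'⟩
    -- move into the subtype ↥V and use the coordinate map
    have hsub : (⟨c • s₀, hcsV s₀ hs₀⟩ : ↥V) ∈ closure (Subtype.val ⁻¹' (a • S)) := by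
      rw [closure_subtype]
      have : Subtype.val '' (Subtype.val ⁻¹' (a • S) : Set ↥V) = a • S := by
        rw [Subtype.image_preimage_coe]
        exact Set.inter_eq_right.2 haSV
      rw [this]
      exact hclos2
    have hΘcont : Continuous fun v : ↥V => ((φ.symm v).1.1 : G ⧸ MulAction.stabilizer G m) :=
      continuous_subtype_val.comp (continuous_fst.comp φ.symm.continuous)
    have hmaps : Set.MapsTo (fun v : ↥V => ((φ.symm v).1.1 : G ⧸ MulAction.stabilizer G m))
        (Subtype.val ⁻¹' (a • S)) {(QuotientGroup.mk a : G ⧸ MulAction.stabilizer G m)} := by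
      rintro v hv
      obtain ⟨y', hy', hvy'⟩ := hv
      have hv2 : a • y' = (v : M) := hvy'
      have hveq : (v : M) = χ (QuotientGroup.mk a) • (((χw⁻¹ * a) • y' : M)) := by
        rw [← hχwdef, ← haS y' hy']
        exact hv2.symm
      have h4 := hφsymm ⟨_, hwU⟩ ⟨_, sl1 _ hh1 y' hy'⟩ v hveq
      show ((φ.symm v).1.1 : G ⧸ MulAction.stabilizer G m) ∈ _
      rw [h4]
      rfl
    have hmk1clos : (QuotientGroup.mk (1 : G) : G ⧸ MulAction.stabilizer G m) ∈
        closure {(QuotientGroup.mk a : G ⧸ MulAction.stabilizer G m)} := by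
      have hcl := map_mem_closure hΘcont hsub hmaps
      have hveq : ((⟨c • s₀, hcsV s₀ hs₀⟩ : ↥V) : M) =
          χ ((⟨QuotientGroup.mk (1 : G), h1U⟩ : ↥U) : G ⧸ MulAction.stabilizer G m) • ((⟨s₀, hs₀⟩ : ↥S) : M) := rfl
      have h4 := hφsymm ⟨_, h1U⟩ ⟨s₀, hs₀⟩ _ hveq
      have hval : ((φ.symm (⟨c • s₀, hcsV s₀ hs₀⟩ : ↥V)).1.1 : G ⧸ MulAction.stabilizer G m) =
          QuotientGroup.mk (1 : G) := by rw [h4]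
      rw [← hval]
      exact hcl
    -- translate by χw⁻¹ : ⟦χw⁻¹⟧ ∈ closure {⟦1⟧}
    have hstep1 : (QuotientGroup.mk (χw⁻¹) : G ⧸ MulAction.stabilizer G m) ∈
        closure {(QuotientGroup.mk (1 : G) : G ⧸ MulAction.stabilizer G m)} := by
      have hmapsTo : Set.MapsTo (fun z : G ⧸ MulAction.stabilizer G m => χw⁻¹ • z)
          {(QuotientGroup.mk a : G ⧸ MulAction.stabilizer G m)} {(QuotientGroup.mk (1 : G) : G ⧸ MulAction.stabilizer G m)} := by
        rintro z rfl
        show χw⁻¹ • (QuotientGroup.mk a : G ⧸ MulAction.stabilizer G m) ∈ _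
        have h5 : χw⁻¹ • (QuotientGroup.mk a : G ⧸ MulAction.stabilizer G m) = QuotientGroup.mk (χw⁻¹ * a) := rfl
        have h6 : (QuotientGroup.mk (χw⁻¹ * a) : G ⧸ MulAction.stabilizer G m) = QuotientGroup.mk (1 : G) := by
          refine QuotientGroup.eq.2 ?_
          simpa using (MulAction.stabilizer G m).inv_mem hh1
        rw [h5, h6]
        rfl
      have hcl := map_mem_closure (continuous_const_smul χw⁻¹) hmk1clos hmapsTo
      have h2 : χw⁻¹ • (QuotientGroup.mk (1 : G) : G ⧸ MulAction.stabilizer G m) =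
          QuotientGroup.mk (χw⁻¹) := by
        show QuotientGroup.mk (χw⁻¹ * 1) = QuotientGroup.mk (χw⁻¹)
        rw [mul_one]
      rw [← h2]
      exact hcl
    -- openness of quotient map : χw⁻¹ ∈ closure H
    have hstep2 : χw⁻¹ ∈ closure ((MulAction.stabilizer G m : Subgroup G) : Set G) := by
      rw [mem_closure_iff]
      intro O hO hmemO
      have hOopen : IsOpen (QuotientGroup.mk '' O : Set (G ⧸ MulAction.stabilizer G m)) :=
        QuotientGroup.isOpenMap_coe O hO
      have hmemO' : (QuotientGroup.mk (χw⁻¹) : G ⧸ MulAction.stabilizer G m) ∈ QuotientGroup.mk '' O :=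
        ⟨χw⁻¹, hmemO, rfl⟩
      obtain ⟨z, hz1, hz2⟩ := mem_closure_iff.1 hstep1 _ hOopen hmemO'
      obtain ⟨b, hbO, rfl⟩ := hz1
      have hb : b ∈ MulAction.stabilizer G m := by
        have := QuotientGroup.eq.1 hz2
        simpa using this
      exact ⟨b, hbO, hb⟩
    -- closure H is a subgroup, hence χw ∈ closure H
    have hstep3 : χw ∈ closure ((MulAction.stabilizer G m : Subgroup G) : Set G) := by
      have h1 : χw⁻¹ ∈ (MulAction.stabilizer G m).topologicalClosure := hstep2
      have h2 := (MulAction.stabilizer G m).topologicalClosure.inv_mem h1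
      rw [inv_inv] at h2
      exact h2
    -- map forward : ⟦χw⟧ = ⟦a⟧ ∈ closure {⟦1⟧}
    have hstep4 : (QuotientGroup.mk a : G ⧸ MulAction.stabilizer G m) ∈
        closure {(QuotientGroup.mk (1 : G) : G ⧸ MulAction.stabilizer G m)} := by
      rw [← hχw]
      have hmapsTo : Set.MapsTo (QuotientGroup.mk : G → G ⧸ MulAction.stabilizer G m) ((MulAction.stabilizer G m : Subgroup G) : Set G)
          {(QuotientGroup.mk (1 : G) : G ⧸ MulAction.stabilizer G m)} := by
        intro b hb
        show (QuotientGroup.mk b : G ⧸ MulAction.stabilizer G m) ∈ _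
        have h7 : (QuotientGroup.mk b : G ⧸ MulAction.stabilizer G m) = QuotientGroup.mk (1 : G) := by
          refine QuotientGroup.eq.2 ?_
          simpa using (MulAction.stabilizer G m).inv_mem hb
        rw [h7]
        rfl
      exact map_mem_closure continuous_quotient_mk' hstep3 hmapsTo
    have hweq : (QuotientGroup.mk a : G ⧸ MulAction.stabilizer G m) = QuotientGroup.mk (1 : G) :=
      hclosure1 _ hstep4 hwU
    have haH : a ∈ MulAction.stabilizer G m := by
      have := QuotientGroup.eq.1 hweq.symm
      simpa using this
    have hgH : g ∈ MulAction.stabilizer G m := by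
      have h1 : c⁻¹ * a ∈ MulAction.stabilizer G m := (MulAction.stabilizer G m).mul_mem ((MulAction.stabilizer G m).inv_mem hcH) haH
      have h2 : c⁻¹ * a = g⁻¹ := by rw [hadef]; group
      rw [h2] at h1
      simpa using (MulAction.stabilizer G m).inv_mem h1
    exact sl1 g hgH s₀ hs₀
  -- assemble
  have hset : {x : ↥(saturation G S) | (x : M) ∈ S} = Subtype.val ⁻¹' closure S := by
    ext x
    constructor
    · exact fun h => subset_closure h
    · exact fun h => key x.1 h x.2
  rw [hset]
  exact isClosed_closure.preimage continuous_subtype_val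
end

section
/- Let S be a slice at m for a G-action on M. Then the map χ^tube: G ×_{G_m} S → M, ⟦g, s⟧ ↦ g·s, is well-defined, injective, G-equivariant, and its image is the open G-invariant set G·S. -/
open Pointwise


/-- If `S` is a slice at `m`, the tube map `G ×_{G_m} S → M`,
`⟦g, s⟧ ↦ g • s`, is well-defined, injective on the twisted product, `G`-equivariant,
and its image is the open `G`-invariant set `G • S`. -/
theorem tube_map_properties {G M : Type*} [Group G] [TopologicalSpace G]
    [IsTopologicalGroup G] [TopologicalSpace M] [MulAction G M] [ContinuousSMul G M]
    (m : M) (S : Set M) (hmS : m ∈ S)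
    (sl1 : ∀ g ∈ MulAction.stabilizer G m, ∀ s ∈ S, g • s ∈ S)
    (sl2 : ∀ g : G, (∃ s ∈ S, g • s ∈ S) → g ∈ MulAction.stabilizer G m)
    (sl3 : ∃ (U : Set (G ⧸ MulAction.stabilizer G m))
        (χ : G ⧸ MulAction.stabilizer G m → G) (V : Set M) (φ : ↥U × ↥S ≃ₜ ↥V),
        IsOpen U ∧ QuotientGroup.mk (1 : G) ∈ U ∧
        (∀ u : ↥U, QuotientGroup.mk (χ u.1) = u.1) ∧
        IsOpen V ∧ m ∈ V ∧
        (∀ (u : ↥U) (s : ↥S), ((φ (u, s) : ↥V) : M) = χ u.1 • (s.1 : M))) :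
    (∀ (g h : G), h ∈ MulAction.stabilizer G m → ∀ s : ↥S,
      (g * h⁻¹) • (h • (s : M)) = g • (s : M)) ∧
    (∀ (g g' : G) (s s' : ↥S), g • (s : M) = g' • (s' : M) →
      ∃ h ∈ MulAction.stabilizer G m, g' = g * h⁻¹ ∧ (s' : M) = h • (s : M)) ∧
    (∀ (a g : G) (s : ↥S), (a * g) • (s : M) = a • (g • (s : M))) ∧
    Set.range (fun p : G × ↥S => p.1 • (p.2 : M)) = saturation G S ∧
    IsOpen (saturation G S) ∧
    (∀ (g : G) (x : M), x ∈ saturation G S → g • x ∈ saturation G S) := by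
  obtain ⟨U, χ, V, φ, hUopen, hU1, hχ, hVopen, hmV, hφ⟩ := sl3
  have hinv : ∀ (g : G) (x : M), x ∈ saturation G S → g • x ∈ saturation G S := by
    rintro g x ⟨a, s, hs, rfl⟩
    exact ⟨g * a, s, hs, mul_smul g a s⟩
  have hVsub : V ⊆ saturation G S := by
    intro v hv
    obtain ⟨u, s⟩ := (φ.symm ⟨v, hv⟩ : ↥U × ↥S)
    have h := hφ (φ.symm ⟨v, hv⟩).1 (φ.symm ⟨v, hv⟩).2
    rw [Prod.mk.eta, φ.apply_symm_apply] at h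
    exact ⟨_, _, (φ.symm ⟨v, hv⟩).2.2, h.symm⟩
  refine ⟨?_, ?_, ?_, ?_, ?_, hinv⟩
  · intro g h hh s
    rw [← mul_smul, inv_mul_cancel_right]
  · intro g g' s s' hgs
    refine ⟨g'⁻¹ * g, sl2 _ ⟨s, s.2, ?_⟩, by group, ?_⟩
    · rw [mul_smul g'⁻¹ g (s:M), hgs, inv_smul_smul g' (s':M)]; exact s'.2
    · rw [mul_smul g'⁻¹ g (s:M), hgs, inv_smul_smul g' (s':M)]
  · intro a g s; exact mul_smul a g (s:M)
  · ext x
    constructor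
    · rintro ⟨⟨g, s⟩, rfl⟩; exact ⟨g, s, s.2, rfl⟩
    · rintro ⟨g, s, hs, rfl⟩; exact ⟨(g, ⟨s, hs⟩), rfl⟩
  · rw [isOpen_iff_forall_mem_open]
    rintro x ⟨g, s, hs, rfl⟩
    -- c := χ ⟦1⟧ lies in the stabilizer
    set u0 : ↥U := ⟨QuotientGroup.mk 1, hU1⟩
    set c : G := χ u0.1 with hc
    have hcstab : c ∈ MulAction.stabilizer G m := by
      have h1 : QuotientGroup.mk c = (QuotientGroup.mk 1 : G ⧸ MulAction.stabilizer G m) :=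
        hχ u0
      have h2 := QuotientGroup.eq.mp h1
      rw [mul_one] at h2
      exact (inv_mem_iff).mp h2
    have hcsV : c • s ∈ V := by
      have := hφ u0 ⟨s, hs⟩
      rw [← this]; exact (φ (u0, ⟨s, hs⟩)).2
    refine ⟨(g * c⁻¹) • V, ?_, ?_, ?_⟩
    · rintro y ⟨v, hv, rfl⟩
      exact hinv _ _ (hVsub hv)
    · exact hVopen.smul _
    · exact ⟨c • s, hcsV, by show (g * c⁻¹) • c • s = g • s; rw [smul_smul]; group⟩
end
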